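/- Assume q is a power of 2 and r ≥ 3. Let C be the F_{q^m}-span of the canonical family A, let B be any ordered basis of C, and let C_mat(B) be its matrix code of relations (a space of symmetric rm×rm matrices with zero diagonal over K = F_{q^m}, since the characteristic is 2). Let P_2^+ ⊆ K[m] be the associated Pfaffian-plus-linear ideal in the variables m = (m_{i,j})_{1≤i<j≤rm}. Then for every positive integer d, the degree-d homogeneous component P_2^+ ∩ Homog_d is a proper K-subspace of Homog_d; equivalently, the Hilbert function of K[m]/P_2^+ is positive at every degree d. -/

import Mathlib

open Matrix

/-- Componentwise (Schur) product of two vectors. -/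
def schur {F : Type*} [Field F] {n : ℕ} (a b : Fin n → F) : Fin n → F :=
  fun t => a t * b t

/-- The matrix code of quadratic relations associated with the ordered family `v`. -/
def Cmat {F : Type*} [Field F] {n : ℕ} {ι : Type*} [Fintype ι] [LinearOrder ι]
    (v : ι → Fin n → F) : Set (Matrix ι ι F) :=
  { M | ∃ c : ι → ι → F,
      (∑ i : ι, ∑ j : ι, (if i ≤ j then c i j • schur (v i) (v j) else 0)) = 0 ∧
      (∀ i j : ι, i < j → M i j = c i j ∧ M j i = c i j) ∧
      (∀ i : ι, M i i = 2 * c i i) }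

/-- Linear order on the index pairs `(j,i)` of the canonical family. -/
noncomputable instance pairLO (m r : ℕ) : LinearOrder (Fin m × Fin r) :=
  LinearOrder.lift' (fun p => finProdFinEquiv p) finProdFinEquiv.injective

/-- The rank-2 Pfaffian ideal (characteristic `2`), in the variables
`m_{i,j}` for `i < j`, generated by the quadrics
`m_{i,j}m_{k,l} + m_{i,k}m_{j,l} + m_{i,l}m_{j,k}` for `i < j < k < l`. -/
noncomputable def pfaffianIdeal (K : Type*) [Field K] (ι : Type*) [LinearOrder ι] :
    Ideal (MvPolynomial {p : ι × ι // p.1 < p.2} K) :=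
  Ideal.span { f | ∃ (i j k l : ι) (hij : i < j) (hjk : j < k) (hkl : k < l),
    f = MvPolynomial.X ⟨(i, j), hij⟩ * MvPolynomial.X ⟨(k, l), hkl⟩
      + MvPolynomial.X ⟨(i, k), hij.trans hjk⟩ * MvPolynomial.X ⟨(j, l), hjk.trans hkl⟩
      + MvPolynomial.X ⟨(i, l), (hij.trans hjk).trans hkl⟩ * MvPolynomial.X ⟨(j, k), hjk⟩ }

/-- The ideal generated by all homogeneous linear forms vanishing on the upper
triangular parts of all matrices of `Cm`. -/
noncomputable def linearFormsIdeal {K : Type*} [Field K] {ι : Type*} [LinearOrder ι]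
    (Cm : Set (Matrix ι ι K)) : Ideal (MvPolynomial {p : ι × ι // p.1 < p.2} K) :=
  Ideal.span { ℓ | ℓ.IsHomogeneous 1 ∧
    ∀ M ∈ Cm, MvPolynomial.eval (fun p : {p : ι × ι // p.1 < p.2} => M p.1.1 p.1.2) ℓ = 0 }

/-!
The canonical family contains `y`, `xy` and `x²y`, and `y ⋆ x²y = xy ⋆ xy`. Writing these
three vectors in the basis `B` with coefficient vectors `u`, `w`, `v` turns this identity into a
quadratic relation whose matrix, in characteristic `2`, is `M = u vᵀ + v uᵀ`. As an alternating
matrix of rank at most `2`, `M` is a zero of every `4 × 4` Pfaffian, and as an element of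
`C_mat(B)` it is a zero of every linear form of `P₂⁺`. Since `u` and `v` are linearly
independent, some entry `M_{kl}` with `k < l` is nonzero, so `m_{kl}^d` is a form of degree `d`
outside `P₂⁺`.
-/

section RelationCode

variable {F : Type*} [Field F] {n : ℕ} {ι : Type*} [Fintype ι]

theorem schur_comm (a c : Fin n → F) : schur a c = schur c a :=
  funext fun t => mul_comm (a t) (c t)

theorem sum_sum_vecMulVec_smul_schur (u v : ι → F) (b : ι → Fin n → F) :
    ∑ k, ∑ l, vecMulVec u v k l • schur (b k) (b l)
      = schur (∑ k, u k • b k) (∑ l, v l • b l) := by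
  funext t
  simp only [schur, Finset.sum_apply, Pi.smul_apply, smul_eq_mul, vecMulVec_apply,
    Finset.sum_mul_sum]
  exact Finset.sum_congr rfl fun k _ => Finset.sum_congr rfl fun l _ => by ring

/-- The relation coefficients are `c i j = T i j + T j i` for `i < j` and `c i i = T i i`. -/
theorem add_transpose_mem_Cmat [LinearOrder ι] (b : ι → Fin n → F) (T : Matrix ι ι F)
    (hT : ∑ k, ∑ l, T k l • schur (b k) (b l) = 0) : T + Tᵀ ∈ Cmat b := by
  refine ⟨fun i j => T i j + if i < j then T j i else 0, ?_, ?_, ?_⟩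
  · calc ∑ i, ∑ j, (if i ≤ j then (T i j + if i < j then T j i else 0) •
            schur (b i) (b j) else 0)
        = ∑ i, ∑ j, ((if i ≤ j then T i j • schur (b i) (b j) else 0)
            + if i < j then T j i • schur (b j) (b i) else 0) := by
          refine Finset.sum_congr rfl fun i _ => Finset.sum_congr rfl fun j _ => ?_
          rcases lt_trichotomy i j with h | rfl | h
          · simp [h, h.le, add_smul, schur_comm (b j)]
          · simp
          · simp [not_le.mpr h, lt_asymm h]
      _ = ∑ i, ∑ j, ((if i ≤ j then T i j • schur (b i) (b j) else 0)
            + if j < i then T i j • schur (b i) (b j) else 0) := by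
          simp only [Finset.sum_add_distrib]
          rw [Finset.sum_comm (f := fun i j => if i < j then _ else _)]
      _ = ∑ i, ∑ j, T i j • schur (b i) (b j) := by
          refine Finset.sum_congr rfl fun i _ => Finset.sum_congr rfl fun j _ => ?_
          rcases le_or_gt i j with h | h
          · simp [h, not_lt.mpr h]
          · simp [h, not_le.mpr h]
      _ = 0 := hT
  · intro i j h
    simp [h, add_comm]
  · intro i
    simp [two_mul]

theorem vecMulVec_add_vecMulVec_mem_Cmat [LinearOrder ι] [CharP F 2] {b : ι → Fin n → F}
    {u v w : ι → F}
    (h : schur (∑ k, u k • b k) (∑ k, v k • b k)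
      = schur (∑ k, w k • b k) (∑ k, w k • b k)) :
    vecMulVec u v + vecMulVec v u ∈ Cmat b := by
  have hrel : ∑ k, ∑ l, (vecMulVec u v - vecMulVec w w) k l • schur (b k) (b l) = 0 := by
    simp only [Matrix.sub_apply, sub_smul, Finset.sum_sub_distrib, sum_sum_vecMulVec_smul_schur,
      h, sub_self]
  convert add_transpose_mem_Cmat b _ hrel using 1
  rw [transpose_sub, transpose_vecMulVec, transpose_vecMulVec, sub_add_sub_comm,
    ← two_smul F (vecMulVec w w), CharTwo.two_eq_zero, zero_smul, sub_zero]

end RelationCode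

section Evaluation

variable {K : Type*} [Field K] {ι : Type*} [LinearOrder ι]

def upperEntries (M : Matrix ι ι K) : {p : ι × ι // p.1 < p.2} → K :=
  fun p => M p.1.1 p.1.2

theorem linearFormsIdeal_le_ker_eval {Cm : Set (Matrix ι ι K)} {M : Matrix ι ι K}
    (hM : M ∈ Cm) : linearFormsIdeal Cm ≤ RingHom.ker (MvPolynomial.eval (upperEntries M)) := by
  rw [linearFormsIdeal, Ideal.span_le]
  rintro ℓ ⟨-, hℓ⟩
  exact hℓ M hM

theorem pfaffianIdeal_le_ker_eval [CharP K 2] (u v : ι → K) :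
    pfaffianIdeal K ι ≤
      RingHom.ker (MvPolynomial.eval (upperEntries (vecMulVec u v + vecMulVec v u))) := by
  rw [pfaffianIdeal, Ideal.span_le]
  rintro f ⟨i, j, k, l, hij, hjk, hkl, rfl⟩
  simp only [SetLike.mem_coe, RingHom.mem_ker, map_add, map_mul, MvPolynomial.eval_X,
    upperEntries, Matrix.add_apply, vecMulVec_apply]
  linear_combination (u i * u k * v j * v l + u i * u l * v j * v k + u j * u k * v i * v l
    + u j * u l * v i * v k + u i * u j * v k * v l + u k * u l * v i * v j) *
    CharTwo.two_eq_zero (R := K)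

theorem upperEntries_vecMulVec_add_vecMulVec_ne_zero [CharP K 2] {u v : ι → K}
    (huv : LinearIndependent K ![u, v]) : upperEntries (vecMulVec u v + vecMulVec v u) ≠ 0 := by
  intro hzero
  have hminor : ∀ k l, u k * v l = u l * v k := by
    intro k l
    rcases lt_trichotomy k l with h | rfl | h
    · have := congrFun hzero ⟨(k, l), h⟩
      simp only [upperEntries, Matrix.add_apply, vecMulVec_apply, Pi.zero_apply] at this
      linear_combination this - u l * v k * CharTwo.two_eq_zero (R := K)
    · rfl
    · have := congrFun hzero ⟨(l, k), h⟩
      simp only [upperEntries, Matrix.add_apply, vecMulVec_apply, Pi.zero_apply] at this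
      linear_combination this - u l * v k * CharTwo.two_eq_zero (R := K)
  obtain ⟨k, hk⟩ := Function.ne_iff.mp (huv.ne_zero 0)
  have hdep : v k • u + (-u k) • v = 0 := by
    funext l
    simp only [Pi.add_apply, Pi.smul_apply, smul_eq_mul, Pi.zero_apply]
    linear_combination hminor l k
  exact hk (neg_eq_zero.mp (LinearIndependent.pair_iff.mp huv _ _ hdep).2)

end Evaluation

theorem MvPolynomial.homogeneousSubmodule_inf_lt_of_le_ker_eval {σ K : Type*} [Field K]
    {I : Ideal (MvPolynomial σ K)} {z : σ → K} (hI : I ≤ RingHom.ker (MvPolynomial.eval z))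
    (hz : z ≠ 0) (d : ℕ) :
    homogeneousSubmodule σ K d ⊓ I.restrictScalars K < homogeneousSubmodule σ K d := by
  obtain ⟨i, hi⟩ := Function.ne_iff.mp hz
  refine SetLike.lt_iff_le_and_exists.mpr ⟨inf_le_left, X i ^ d,
    (mem_homogeneousSubmodule _ _).mpr (isHomogeneous_X_pow i d), fun hmem => ?_⟩
  have := hI (Submodule.mem_inf.mp hmem).2
  rw [RingHom.mem_ker, map_pow, eval_X] at this
  exact pow_ne_zero d hi this

theorem linearIndependent_pair_of_sum_smul {R M ι : Type*} [CommRing R] [AddCommGroup M]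
    [Module R M] [Fintype ι] {b : ι → M} {u v : ι → R}
    (h : LinearIndependent R ![∑ k, u k • b k, ∑ k, v k • b k]) :
    LinearIndependent R ![u, v] := by
  refine .of_comp (Fintype.linearCombination R b) ?_
  convert h using 1
  ext i
  fin_cases i <;> simp [Fintype.linearCombination_apply]

theorem pfaffian_plus_linear_hilbert_positive_general
    (q m r nn : ℕ) (hq : ∃ e : ℕ, 0 < e ∧ q = 2 ^ e)
    (hm : 0 < m) (hr : 3 ≤ r)
    (F : Type*) [Field F] [Fintype F] (hF : Fintype.card F = q ^ m)
    (x y : Fin nn → F)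
    (A : Fin m × Fin r → Fin nn → F)
    (hA : A = fun p t => (x t ^ (p.2 : ℕ) * y t) ^ q ^ (p.1 : ℕ))
    (hAind : LinearIndependent F A)
    (b : Fin (r * m) → Fin nn → F)
    (hbspan : Submodule.span F (Set.range b) = Submodule.span F (Set.range A))
    (P2plus : Ideal (MvPolynomial {p : Fin (r * m) × Fin (r * m) // p.1 < p.2} F))
    (hP2plus : P2plus = pfaffianIdeal F (Fin (r * m)) + linearFormsIdeal (Cmat b)) :
    ∀ d : ℕ, 0 < d →
      MvPolynomial.homogeneousSubmodule {p : Fin (r * m) × Fin (r * m) // p.1 < p.2} F d ⊓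
          Submodule.restrictScalars F P2plus <
        MvPolynomial.homogeneousSubmodule {p : Fin (r * m) × Fin (r * m) // p.1 < p.2} F d := by
  intro d _
  obtain ⟨e, -, rfl⟩ := hq
  have : CharP F 2 := charP_of_card_eq_prime_pow (hF.trans (pow_mul 2 e m).symm)
  let a₀ : Fin m × Fin r := (⟨0, hm⟩, ⟨0, by omega⟩)
  let a₁ : Fin m × Fin r := (⟨0, hm⟩, ⟨1, by omega⟩)
  let a₂ : Fin m × Fin r := (⟨0, hm⟩, ⟨2, by omega⟩)
  have hcoeff : ∀ p, ∃ u : Fin (r * m) → F, ∑ k, u k • b k = A p := fun p =>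
    (Submodule.mem_span_range_iff_exists_fun F).mp
      (hbspan ▸ Submodule.subset_span (Set.mem_range_self p))
  obtain ⟨u, hu⟩ := hcoeff a₀
  obtain ⟨w, hw⟩ := hcoeff a₁
  obtain ⟨v, hv⟩ := hcoeff a₂
  -- `y ⋆ x²y = (xy) ⋆ (xy)`
  have hrel : schur (A a₀) (A a₂) = schur (A a₁) (A a₁) := by
    subst hA
    funext t
    simp only [schur, a₀, a₁, a₂, pow_zero, pow_one]
    ring
  have hM : vecMulVec u v + vecMulVec v u ∈ Cmat b :=
    vecMulVec_add_vecMulVec_mem_Cmat (w := w) (by rw [hu, hv, hw]; exact hrel)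
  have huv : LinearIndependent F ![u, v] := by
    refine linearIndependent_pair_of_sum_smul (b := b) ?_
    rw [hu, hv]
    have hpair := hAind.comp ![a₀, a₂] (by simp [a₀, a₂])
    rwa [show A ∘ ![a₀, a₂] = ![A a₀, A a₂] from funext fun i => by fin_cases i <;> rfl]
      at hpair
  refine MvPolynomial.homogeneousSubmodule_inf_lt_of_le_ker_eval ?_
    (upperEntries_vecMulVec_add_vecMulVec_ne_zero huv) d
  rw [hP2plus, Submodule.add_eq_sup]
  exact sup_le (pfaffianIdeal_le_ker_eval u v) (linearFormsIdeal_le_ker_eval hM)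

/-- Let `q` be a power of `2`, `r ≥ 3`, `K = F_{q^m}`, `C` the span of
the canonical family `A`, `B` any ordered basis of `C`, and `P_2^+` the
Pfaffian-plus-linear ideal associated with the matrix code `C_mat(B)`. Then for every
positive degree `d` the homogeneous component `P_2^+ ∩ Homog_d` is a proper subspace of
`Homog_d`; equivalently, the Hilbert function of `K[m]/P_2^+` is positive at every
degree. -/
theorem pfaffian_plus_linear_hilbert_positive
    (q m r nn : ℕ) (hq : ∃ e : ℕ, 0 < e ∧ q = 2 ^ e)
    (hm : 0 < m) (hr : 3 ≤ r) (hn : 0 < nn)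
    (F : Type*) [Field F] [Fintype F] (hF : Fintype.card F = q ^ m)
    (x y : Fin nn → F) (hx : Function.Injective x) (hy : ∀ t, y t ≠ 0)
    (A : Fin m × Fin r → Fin nn → F)
    (hA : A = fun p t => (x t ^ (p.2 : ℕ) * y t) ^ q ^ (p.1 : ℕ))
    (hAind : LinearIndependent F A)
    (b : Fin (r * m) → Fin nn → F)
    (hbind : LinearIndependent F b)
    (hbspan : Submodule.span F (Set.range b) = Submodule.span F (Set.range A))
    (P2plus : Ideal (MvPolynomial {p : Fin (r * m) × Fin (r * m) // p.1 < p.2} F))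
    (hP2plus : P2plus = pfaffianIdeal F (Fin (r * m)) + linearFormsIdeal (Cmat b)) :
    ∀ d : ℕ, 0 < d →
      MvPolynomial.homogeneousSubmodule {p : Fin (r * m) × Fin (r * m) // p.1 < p.2} F d ⊓
          Submodule.restrictScalars F P2plus <
        MvPolynomial.homogeneousSubmodule {p : Fin (r * m) × Fin (r * m) // p.1 < p.2} F d :=
  pfaffian_plus_linear_hilbert_positive_general q m r nn hq hm hr F hF x y A hA hAind b hbspan
    P2plus hP2plus
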